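/- Let ℳ = (Δ, (I_k)_{k∈ℕ}) be a temporal interpretation that is stabilized from instant N onward, i.e. A^{I_k} = A^{I_N} for every concept name A and S^{I_k} = S^{I_N} for every role name S, for all k ≥ N. Then for every temporal concept D, the extension of D also stabilizes: D^{I_k} = D^{I_N} for all k ≥ N. -/

import Mathlib

/-- TDL-Lite roles: a role name `S ∈ N_R` (coded by a natural number) or its inverse `S⁻`. -/
inductive TRole : Type
  | name (S : ℕ)
  | inv  (S : ℕ)
deriving DecidableEq

/-- TDL-Lite temporal concepts: `⊥ | ⊤ | A | ∃R | ¬D | D₁ ⊓ D₂ | ◇_F D | □_F D`. -/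
inductive TConcept : Type
  | bot
  | top
  | atom (A : ℕ)
  | ex (R : TRole)
  | neg (C : TConcept)
  | inter (C D : TConcept)
  | dia (C : TConcept)
  | box (C : TConcept)
deriving DecidableEq

/-- A temporal interpretation: a fixed nonempty domain `Δ` together with, for each
instant `n`, an extension for every concept name and every role name. -/
structure TInterp (Δ : Type) : Type where
  nonempty : Nonempty Δ
  conc : ℕ → ℕ → Set Δ
  role : ℕ → ℕ → Set (Δ × Δ)

variable {Δ : Type}

/-- Semantics of roles at an instant. -/
def TInterp.rsem (M : TInterp Δ) (n : ℕ) : TRole → Set (Δ × Δ)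
  | .name S => M.role n S
  | .inv S  => {p | (p.2, p.1) ∈ M.role n S}

/-- Semantics of temporal concepts at an instant; `◇_F` and `□_F` quantify over the
strict future. -/
def TInterp.csem (M : TInterp Δ) : TConcept → ℕ → Set Δ
  | .bot, _ => ∅
  | .top, _ => Set.univ
  | .atom A, n => M.conc n A
  | .ex R, n => {d | ∃ d', (d, d') ∈ M.rsem n R}
  | .neg C, n => (M.csem C n)ᶜ
  | .inter C D, n => M.csem C n ∩ M.csem D n
  | .dia C, n => {d | ∃ k, n < k ∧ d ∈ M.csem C k}
  | .box C, n => {d | ∀ k, n < k → d ∈ M.csem C k}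

/-- `M` is stabilized from instant `N` onward: the extension of every concept name and of
every role name at any instant `k ≥ N` coincides with its extension at `N`. -/
def Stabilized (M : TInterp Δ) (N : ℕ) : Prop :=
  ∀ k : ℕ, N ≤ k → (∀ A : ℕ, M.conc k A = M.conc N A) ∧ (∀ S : ℕ, M.role k S = M.role N S)

section FutureOperators

variable {α : Type*} {f : ℕ → Set α} {N n : ℕ}

theorem setOf_exists_future_mem_eq_of_const (hf : ∀ k, N ≤ k → f k = f N) (hn : N ≤ n) :
    {d | ∃ k, n < k ∧ d ∈ f k} = f N := by
  ext d
  constructor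
  · rintro ⟨k, hk, hd⟩
    rwa [hf k (by omega)] at hd
  · intro hd
    exact ⟨n + 1, n.lt_succ_self, by rwa [hf (n + 1) (by omega)]⟩

theorem setOf_forall_future_mem_eq_of_const (hf : ∀ k, N ≤ k → f k = f N) (hn : N ≤ n) :
    {d | ∀ k, n < k → d ∈ f k} = f N := by
  ext d
  constructor
  · intro hd
    simpa only [hf (n + 1) (by omega)] using hd (n + 1) n.lt_succ_self
  · intro hd k hk
    rwa [hf k (by omega)]

end FutureOperators

theorem TInterp.rsem_eq_of_stabilized {M : TInterp Δ} {N k : ℕ} (hstab : Stabilized M N)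
    (hk : N ≤ k) (R : TRole) : M.rsem k R = M.rsem N R := by
  cases R <;> simp only [TInterp.rsem, (hstab k hk).2]

/-- If a temporal interpretation is stabilized from instant `N` onward,
then the extension of every temporal concept also stabilizes from `N` onward. -/
theorem concept_extension_stabilizes (M : TInterp Δ) (N : ℕ) (hstab : Stabilized M N) :
    ∀ (D : TConcept) (k : ℕ), N ≤ k → M.csem D k = M.csem D N := by
  intro D
  induction D with
  | bot | top => intro k _; rfl
  | atom A => intro k hk; exact (hstab k hk).1 A
  | ex R => intro k hk; simp only [TInterp.csem, M.rsem_eq_of_stabilized hstab hk]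
  | neg C ih => intro k hk; simp only [TInterp.csem, ih k hk]
  | inter C D ihC ihD => intro k hk; simp only [TInterp.csem, ihC k hk, ihD k hk]
  | dia C ih =>
    intro k hk
    simp only [TInterp.csem, setOf_exists_future_mem_eq_of_const ih hk,
      setOf_exists_future_mem_eq_of_const ih le_rfl]
  | box C ih =>
    intro k hk
    simp only [TInterp.csem, setOf_forall_future_mem_eq_of_const ih hk,
      setOf_forall_future_mem_eq_of_const ih le_rfl]
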